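/- arXiv:1012.4583 — 3 statements merged into one kernel-verified Lean document; each statement's English description precedes it below -/
import Mathlib

section
/- Let d ≥ 1 and write ω^j for exp(2πi·j/d). Let X and Z be finite types, α : X → ℂ, h : X → Z, and f : Z → ZMod d an arbitrary function (not assumed linear). Define ψ : X × Z × ZMod d → ℂ by ψ(x, z, c) = α x if z = h x and c = f (h x), and ψ(x, z, c) = 0 otherwise. For each a ∈ ZMod d define K_a ψ : X × Z → ℂ by (K_a ψ)(x, z) = ω^{-(a.val · (f z).val)} · Σ_{c ∈ ZMod d} (1/√d) · ω^{a.val · c.val} · ψ(x, z, c). Then for every a ∈ ZMod d, K_a ψ = (1/√d) · φ, where φ : X × Z → ℂ is given by φ(x, z) = α x if z = h x and 0 otherwise. In particular, the corrected post-measurement state is, up to the common normalization factor 1/√d, the same pure state φ for every measurement outcome a, regardless of whether f is linear. -/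
/-- Single-node disentangling step: measuring the last register of
`ψ = Σ_x α_x |x⟩|h x⟩|f(h x)⟩` in the Fourier basis with outcome `a` and applying the
phase correction `|z⟩ ↦ ω^{-a·f(z)}|z⟩` yields, for every outcome `a`, the same state
`(1/√d)·φ` where `φ = Σ_x α_x |x⟩|h x⟩`, even for nonlinear `f`. -/
theorem measure_and_correct (d : ℕ) [NeZero d] (X Z : Type*) [Fintype X] [Fintype Z]
    [DecidableEq Z]
    (ω : ℂ) (hω : ω = Complex.exp (2 * (Real.pi : ℂ) * Complex.I / (d : ℂ)))
    (α : X → ℂ) (h : X → Z) (f : Z → ZMod d)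
    (ψ : X × Z × ZMod d → ℂ)
    (hψ : ∀ x z c, ψ (x, z, c) = if z = h x ∧ c = f (h x) then α x else 0)
    (φ : X × Z → ℂ)
    (hφ : ∀ x z, φ (x, z) = if z = h x then α x else 0) :
    ∀ a : ZMod d, ∀ x z,
      ω ^ (-((a.val * (f z).val : ℕ) : ℤ)) *
        ∑ c : ZMod d, (1 / (Real.sqrt d : ℂ)) * ω ^ (a.val * c.val) * ψ (x, z, c) =
      (1 / (Real.sqrt d : ℂ)) * φ (x, z) := by
  intro a x z
  have hω0 : ω ≠ 0 := by rw [hω]; exact Complex.exp_ne_zero _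
  have hsum : ∑ c : ZMod d, (1 / (Real.sqrt d : ℂ)) * ω ^ (a.val * c.val) * ψ (x, z, c)
      = (1 / (Real.sqrt d : ℂ)) * ω ^ (a.val * (f (h x)).val) *
        (if z = h x then α x else 0) := by
    rw [Finset.sum_eq_single (f (h x))]
    · rw [hψ]
      by_cases hz : z = h x <;> simp [hz]
    · intro c _ hc
      rw [hψ]
      simp [hc]
    · simp
  rw [hsum]
  by_cases hz : z = h x
  · subst hz
    rw [if_pos rfl] at hsum
    rw [hφ]
    rw [if_pos rfl]
    rw [zpow_neg, ← zpow_natCast ω (a.val * (f (h x)).val)]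
    have hinv : ω ^ ((a.val * (f (h x)).val : ℕ) : ℤ) *
        (ω ^ ((a.val * (f (h x)).val : ℕ) : ℤ))⁻¹ = 1 :=
      mul_inv_cancel₀ (zpow_ne_zero _ hω0)
    linear_combination (1 / (Real.sqrt (d : ℝ) : ℂ) * α x) * hinv
  · rw [hφ]
    simp [hz]
end

section
/- Let d ≥ 1 and write ω^j for exp(2πi·j/d). Let X and Z be finite types, α : X → ℂ, h : X → Z, and f : Z → ZMod d an arbitrary function. Define ψ : X × Z × ZMod d → ℂ by ψ(x, z, c) = α x if z = h x and c = f (h x), and 0 otherwise; define φ : X × Z → ℂ by φ(x, z) = α x if z = h x and 0 otherwise; and for a ∈ ZMod d define K_a ψ : X × Z → ℂ by (K_a ψ)(x, z) = ω^{-(a.val · (f z).val)} · Σ_{c ∈ ZMod d} (1/√d) · ω^{a.val · c.val} · ψ(x, z, c). Then Σ_{a ∈ ZMod d} vecMulVec (K_a ψ) (star (K_a ψ)) = vecMulVec φ (star φ), where vecMulVec u (star u) denotes the outer-product matrix with entries u(p) · conj(u(q)). That is, the measure-in-Fourier-basis-and-correct procedure, averaged over all outcomes, is trace preserving on such states and deterministically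 outputs the pure state φ. -/
/-- The measure-in-Fourier-basis-and-correct procedure, summed over all outcomes `a`,
is trace preserving on states of the form `ψ = Σ_x α_x |x⟩|h x⟩|f(h x)⟩` and
deterministically outputs the pure state `φ = Σ_x α_x |x⟩|h x⟩`:
`Σ_a |K_a ψ⟩⟨K_a ψ| = |φ⟩⟨φ|`. -/
theorem measure_and_correct_trace_preserving (d : ℕ) [NeZero d]
    (X Z : Type*) [Fintype X] [Fintype Z] [DecidableEq Z]
    (ω : ℂ) (hω : ω = Complex.exp (2 * (Real.pi : ℂ) * Complex.I / (d : ℂ)))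
    (α : X → ℂ) (h : X → Z) (f : Z → ZMod d)
    (ψ : X × Z × ZMod d → ℂ)
    (hψ : ∀ x z c, ψ (x, z, c) = if z = h x ∧ c = f (h x) then α x else 0)
    (φ : X × Z → ℂ)
    (hφ : ∀ x z, φ (x, z) = if z = h x then α x else 0)
    (K : ZMod d → (X × Z → ℂ))
    (hK : ∀ (a : ZMod d) (x : X) (z : Z),
      K a (x, z) = ω ^ (-((a.val * (f z).val : ℕ) : ℤ)) *
        ∑ c : ZMod d, (1 / (Real.sqrt d : ℂ)) * ω ^ (a.val * c.val) * ψ (x, z, c)) :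
    ∑ a : ZMod d, Matrix.vecMulVec (K a) (star (K a)) = Matrix.vecMulVec φ (star φ) := by
  have hω0 : ω ≠ 0 := by rw [hω]; exact Complex.exp_ne_zero _
  have hd0 : (d : ℂ) ≠ 0 := by exact_mod_cast (NeZero.ne d)
  have hKφ : ∀ (a : ZMod d) (p : X × Z), K a p = (1 / (Real.sqrt d : ℂ)) * φ p := by
    rintro a ⟨x, z⟩
    rw [hK, hφ]
    have hsum : ∑ c : ZMod d, (1 / (Real.sqrt d : ℂ)) * ω ^ (a.val * c.val) * ψ (x, z, c)
        = if z = h x then (1 / (Real.sqrt d : ℂ)) * ω ^ (a.val * (f (h x)).val) * α x else 0 := by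
      by_cases hz : z = h x
      · simp only [hz, hψ, true_and]
        rw [Finset.sum_eq_single (f (h x))]
        · simp
        · intro b _ hb; simp [hb]
        · simp
      · simp [hψ, hz]
    rw [hsum]
    by_cases hz : z = h x
    · subst hz
      rw [if_pos rfl, if_pos rfl]
      have h1 : ω ^ (-((a.val * (f (h x)).val : ℕ) : ℤ)) * ω ^ (a.val * (f (h x)).val) = 1 := by
        rw [← zpow_natCast ω (a.val * (f (h x)).val), ← zpow_add₀ hω0]
        simp
      calc ω ^ (-((a.val * (f (h x)).val : ℕ) : ℤ)) *
            ((1 / (Real.sqrt d : ℂ)) * ω ^ (a.val * (f (h x)).val) * α x)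
          = (ω ^ (-((a.val * (f (h x)).val : ℕ) : ℤ)) * ω ^ (a.val * (f (h x)).val)) *
            ((1 / (Real.sqrt d : ℂ)) * α x) := by ring
        _ = (1 / (Real.sqrt d : ℂ)) * α x := by rw [h1]; ring
    · simp [hz]
  ext p q
  simp only [Matrix.sum_apply, Matrix.vecMulVec_apply, Pi.star_apply, hKφ]
  have hsq : (1 / (Real.sqrt d : ℂ)) * star (1 / (Real.sqrt d : ℂ)) = 1 / (d : ℂ) := by
    have : star ((Real.sqrt d : ℂ)) = (Real.sqrt d : ℂ) := by
      simp [Complex.star_def, Complex.conj_ofReal]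
    rw [star_div₀, this, star_one, div_mul_div_comm, one_mul]
    congr 1
    rw [← Complex.ofReal_mul, Real.mul_self_sqrt (Nat.cast_nonneg d)]
    simp
  simp only [star_mul']
  rw [Finset.sum_const, Finset.card_univ, ZMod.card]
  have h2 : (1 / (Real.sqrt d : ℂ)) * φ p * (star (1 / (Real.sqrt d : ℂ)) * star (φ q))
      = (1 / (d : ℂ)) * (φ p * star (φ q)) := by
    calc (1 / (Real.sqrt d : ℂ)) * φ p * (star (1 / (Real.sqrt d : ℂ)) * star (φ q))
        = ((1 / (Real.sqrt d : ℂ)) * star (1 / (Real.sqrt d : ℂ))) * (φ p * star (φ q)) := by ring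
      _ = (1 / (d : ℂ)) * (φ p * star (φ q)) := by rw [hsq]
  rw [h2, nsmul_eq_mul]
  field_simp
end

section
/- Let d, k ≥ 1, write ω^j for exp(2πi·j/d), and set X = (Fin k → ZMod d). Let α : X → ℂ and define ψ : X × X → ℂ by ψ(s, t) = α t if s = t and 0 otherwise. For b ∈ X define L_b ψ : X → ℂ by (L_b ψ)(t) = (∏_{i ∈ Fin k} ω^{-((b i).val · (t i).val)}) · Σ_{s ∈ X} (∏_{i ∈ Fin k} (1/√d) · ω^{(b i).val · (s i).val}) · ψ(s, t). Then: (1) for every b ∈ X, L_b ψ = d^{-k/2} · α; and (2) if Σ_{x ∈ X} |α x|² = 1 then for every b ∈ X, Σ_{t ∈ X} |Σ_{s ∈ X} (∏_i (1/√d) · ω^{(b i).val · (s i).val}) · ψ(s, t)|² = d^{-k}, i.e. each outcome vector b occurs with probability exactly d^{-k}. -/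
open Finset

/-! The state `ψ` is supported on the diagonal `s = t`, so summing against the Fourier
weights only picks up `s = t`, leaving the product of local phases `ω^{(b i)(t i)} / √d`.
Each local correction `ω^{-(b i)(t i)}` cancels its phase, giving `(1/√d)^k · α t`; since
`|ω| = 1`, the outcome probability is `(1/√d)^{2k} · Σ |α t|² = d^{-k}`. -/

theorem sum_mul_of_eq_ite_diag {X R : Type*} [Fintype X] [DecidableEq X]
    [NonUnitalNonAssocSemiring R] {α : X → R} {ψ : X × X → R}
    (hψ : ∀ s t, ψ (s, t) = if s = t then α t else 0) (c : X → R) (t : X) :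
    ∑ s, c s * ψ (s, t) = c t * α t := by
  simp only [hψ, mul_ite, mul_zero]
  exact Fintype.sum_ite_eq' t fun s => c s * α t

theorem prod_zpow_neg_mul_mul_pow {ι K : Type*} [Fintype ι] [Field K] {ω : K} (hω : ω ≠ 0)
    (c : K) (n : ι → ℕ) :
    ∏ i, ω ^ (-(n i : ℤ)) * (c * ω ^ n i) = c ^ Fintype.card ι := by
  have hcancel : ∀ i, ω ^ (-(n i : ℤ)) * (c * ω ^ n i) = c := fun i => by
    rw [zpow_neg, zpow_natCast, mul_left_comm, inv_mul_cancel₀ (pow_ne_zero _ hω), mul_one]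
  simp only [hcancel, prod_const, card_univ]

theorem norm_prod_mul_pow_of_norm_eq_one {ι 𝕜 : Type*} [Fintype ι] [NormedField 𝕜] {ω : 𝕜}
    (hω : ‖ω‖ = 1) (c : 𝕜) (n : ι → ℕ) :
    ‖∏ i, c * ω ^ n i‖ = ‖c‖ ^ Fintype.card ι := by
  simp [norm_prod, hω]

theorem Complex.norm_exp_two_pi_I_div (d : ℕ) :
    ‖Complex.exp (2 * (Real.pi : ℂ) * Complex.I / (d : ℂ))‖ = 1 := by
  simp [Complex.norm_exp]

theorem Real.rpow_neg_natCast_div_two {x : ℝ} (hx : 0 ≤ x) (k : ℕ) :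
    x ^ (-(k : ℝ) / 2) = (1 / √x) ^ k := by
  rw [div_pow, one_pow, neg_div, Real.rpow_neg hx, Real.sqrt_eq_rpow,
    ← Real.rpow_natCast _ k, ← Real.rpow_mul hx, one_div_mul_eq_div, one_div]

theorem Real.one_div_sqrt_pow_sq {x : ℝ} (hx : 0 ≤ x) (k : ℕ) :
    ((1 / √x) ^ k) ^ 2 = x ^ (-(k : ℤ)) := by
  rw [← pow_mul, mul_comm, pow_mul, div_pow, one_pow, Real.sq_sqrt hx, one_div, inv_pow,
    zpow_neg, zpow_natCast]

theorem source_measurement_correction_general (d k : ℕ) [NeZero d]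
    (ω : ℂ) (hω : ω = Complex.exp (2 * (Real.pi : ℂ) * Complex.I / (d : ℂ)))
    (α : (Fin k → ZMod d) → ℂ)
    (ψ : (Fin k → ZMod d) × (Fin k → ZMod d) → ℂ)
    (hψ : ∀ s t : Fin k → ZMod d, ψ (s, t) = if s = t then α t else 0)
    (L : (Fin k → ZMod d) → ((Fin k → ZMod d) → ℂ))
    (hL : ∀ b t : Fin k → ZMod d,
      L b t = (∏ i : Fin k, ω ^ (-(((b i).val * (t i).val : ℕ) : ℤ))) *
        ∑ s : Fin k → ZMod d,
          (∏ i : Fin k, (1 / (Real.sqrt d : ℂ)) * ω ^ ((b i).val * (s i).val)) * ψ (s, t)) :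
    (∀ b : Fin k → ZMod d,
      L b = fun t => (((d : ℝ) ^ (-(k : ℝ) / 2) : ℝ) : ℂ) * α t) ∧
    ((∑ x : Fin k → ZMod d, ‖α x‖ ^ 2 = 1) →
      ∀ b : Fin k → ZMod d,
        ∑ t : Fin k → ZMod d,
          ‖∑ s : Fin k → ZMod d,
            (∏ i : Fin k, (1 / (Real.sqrt d : ℂ)) * ω ^ ((b i).val * (s i).val)) * ψ (s, t)‖ ^ 2 =
          (d : ℝ) ^ (-(k : ℤ))) := by
  have hd : (0 : ℝ) ≤ d := d.cast_nonneg
  have hω0 : ω ≠ 0 := hω ▸ Complex.exp_ne_zero _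
  have hω1 : ‖ω‖ = 1 := hω ▸ Complex.norm_exp_two_pi_I_div d
  have hnorm : ‖(1 / (Real.sqrt d : ℂ))‖ = 1 / √d := by
    rw [norm_div, norm_one, Complex.norm_real, Real.norm_of_nonneg (Real.sqrt_nonneg _)]
  refine ⟨fun b => funext fun t => ?_, fun hα b => ?_⟩
  · rw [hL, sum_mul_of_eq_ite_diag hψ, ← mul_assoc, ← prod_mul_distrib,
      prod_zpow_neg_mul_mul_pow hω0, Fintype.card_fin, Real.rpow_neg_natCast_div_two hd]
    push_cast
    rfl
  · calc _ = ∑ t : Fin k → ZMod d, ((1 / √d) ^ k) ^ 2 * ‖α t‖ ^ 2 := by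
          refine sum_congr rfl fun t _ => ?_
          rw [sum_mul_of_eq_ite_diag hψ, norm_mul, norm_prod_mul_pow_of_norm_eq_one hω1,
            hnorm, Fintype.card_fin, mul_pow]
      _ = (d : ℝ) ^ (-(k : ℤ)) := by
          rw [← mul_sum, hα, mul_one, Real.one_div_sqrt_pow_sq hd]

/-- Part 3 of the protocol: from the state `ψ = Σ_x α_x |x⟩_S |x⟩_T`, measuring each of
the `k` source registers in the Fourier basis with outcome `b i` and applying the local
phase corrections `|x⟩ ↦ ω^{-(b i)·x}|x⟩` at the targets gives `L_b ψ = d^{-k/2}·α` for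
every `b`; moreover if `α` is a unit vector then each outcome `b` occurs with probability
exactly `d^{-k}`. -/
theorem source_measurement_correction (d k : ℕ) [NeZero d] (hk : 1 ≤ k)
    (ω : ℂ) (hω : ω = Complex.exp (2 * (Real.pi : ℂ) * Complex.I / (d : ℂ)))
    (α : (Fin k → ZMod d) → ℂ)
    (ψ : (Fin k → ZMod d) × (Fin k → ZMod d) → ℂ)
    (hψ : ∀ s t : Fin k → ZMod d, ψ (s, t) = if s = t then α t else 0)
    (L : (Fin k → ZMod d) → ((Fin k → ZMod d) → ℂ))
    (hL : ∀ b t : Fin k → ZMod d,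
      L b t = (∏ i : Fin k, ω ^ (-(((b i).val * (t i).val : ℕ) : ℤ))) *
        ∑ s : Fin k → ZMod d,
          (∏ i : Fin k, (1 / (Real.sqrt d : ℂ)) * ω ^ ((b i).val * (s i).val)) * ψ (s, t)) :
    (∀ b : Fin k → ZMod d,
      L b = fun t => (((d : ℝ) ^ (-(k : ℝ) / 2) : ℝ) : ℂ) * α t) ∧
    ((∑ x : Fin k → ZMod d, ‖α x‖ ^ 2 = 1) →
      ∀ b : Fin k → ZMod d,
        ∑ t : Fin k → ZMod d,
          ‖∑ s : Fin k → ZMod d,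
            (∏ i : Fin k, (1 / (Real.sqrt d : ℂ)) * ω ^ ((b i).val * (s i).val)) * ψ (s, t)‖ ^ 2 =
          (d : ℝ) ^ (-(k : ℤ))) :=
  source_measurement_correction_general d k ω hω α ψ hψ L hL
end
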